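/- (Theorem 2: influence of removing the first sample.) Let m ≥ 2, y ∈ ℝ^m, τ ∈ ℝ^m with τ_i > 0, λ ≥ 0, and let u* be the unique minimizer of F(·, y, τ, λ), with segments N*_1, …, N*_{K*}, segment levels v*_1, …, v*_{K*}, and i^{j}_1 the first index of the j-th segment. Remove the first sample: let y⁻ = (y_2, …, y_m), τ⁻ = (τ_2, …, τ_m), and let û ∈ ℝ^{m−1} be the unique minimizer of F(·, y⁻, τ⁻, λ) (indexed so that û_{i−1} corresponds to the original index i). If there exists an index j ∈ {2, …, K*} such that sign(v*_{j−1} − v*_j) = sign(v*_1 − y_1), then, taking j to be the smallest such index (with 2 ≤ j ≤ K* − 1 so that segment j+1 exists), û_{i−1} = u*_i for every i ≥ i^{j+1}_1. -/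

import Mathlib

/-- The weighted total-variation functional
`F(u, y, τ, λ) = Σ_{i=1}^n τ_i (y_i − u_i)² + λ Σ_{i=1}^{n−1} |u_{i+1} − u_i|`
for a signal with `n + 1` samples (indexed by `Fin (n+1)`, so that the number
of samples is an arbitrary integer `≥ 1`). -/
noncomputable def tvF (n : ℕ) (y τ : Fin (n + 1) → ℝ) (lam : ℝ)
    (u : Fin (n + 1) → ℝ) : ℝ :=
  (∑ i : Fin (n + 1), τ i * (y i - u i) ^ 2) +
    lam * ∑ i : Fin n, |u i.succ - u i.castSucc|

/-!
For a minimizer `u` let `z_k = Σ_{i ≤ k} 2 τ_i (u_i − y_i)` be the dual variable of the edge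
`(k, k + 1)`. Shifting the prefix `u_0, …, u_k` by `t` changes `F` by `(Σ_{i ≤ k} τ_i) t² + z_k t`
plus the change of `λ |u_{k+1} − u_k − t|`; hence `|z_k| ≤ λ`, `z_k = λ sign (u_{k+1} − u_k)` at a
jump, and `z = 0` at the last sample.

Let `û` be the minimizer without the first sample (indexed from `1`) and `c = u_0 − y_0`.
Prepending to `û` a copy of its first value, with that value as datum, gives a minimizer of the
full problem for data that differ from `y` only at `0`. Minimizers are monotone in the data (a
lattice argument), and the two stationarity conditions give `Σ_{i ≥ 1} 2 τ_i (û_i − u_i) = 2 τ_0 c`;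
together these force `c (û_i − u_i) ≥ 0` for every `i ≥ 1`. Hence, with `ẑ` the dual variable
of `û`, `c D_k = c Σ_{1 ≤ i ≤ k} 2 τ_i (û_i − u_i) = c (ẑ_k − z_k) + 2 τ_0 c²` is nondecreasing in
`k` and ends at `2 τ_0 c²`. At a jump `(k, k + 1)` of `u` with `sign (u_k − u_{k+1}) = sign c`,
`c z_k = −λ |c| ≤ c ẑ_k`, so `c D_k ≥ 2 τ_0 c²` already: all later increments vanish, i.e.
`û_i = u_i` for `i > k`. That jump is not the edge `(0, 1)`, where `z_0 = 2 τ_0 c` has the sign of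
`u_1 − u_0`.
-/

open Finset

theorem Real.mul_sign_self (r : ℝ) : r * Real.sign r = |r| := by
  rcases lt_trichotomy r 0 with h | rfl | h
  · rw [Real.sign_of_neg h, abs_of_neg h]; ring
  · simp
  · rw [Real.sign_of_pos h, abs_of_pos h]; ring

theorem abs_le_of_forall_quadratic_nonneg {A B C δ : ℝ} (hδ : 0 < δ)
    (h : ∀ t, |t| ≤ δ → 0 ≤ A * t ^ 2 + B * t + C * |t|) : |B| ≤ C := by
  by_contra! hBC
  set s := min δ ((|B| - C) / (2 * (|A| + 1)))
  have hs : 0 < s := lt_min hδ (div_pos (by linarith) (by positivity))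
  have hsA : |A| * s ≤ (|B| - C) / 2 := by
    have : s * (2 * (|A| + 1)) ≤ |B| - C :=
      (le_div_iff₀ (by positivity)).mp (min_le_right _ _)
    nlinarith [abs_nonneg A]
  have hAs : A * s ^ 2 ≤ (|B| - C) / 2 * s := by
    nlinarith [le_abs_self A, mul_le_mul_of_nonneg_right hsA hs.le]
  obtain ⟨t, ht, hBt⟩ : ∃ t, |t| = s ∧ B * t = -(|B| * s) := by
    rcases le_total 0 B with hB | hB
    · exact ⟨-s, by simp [hs.le], by rw [abs_of_nonneg hB]; ring⟩
    · exact ⟨s, abs_of_pos hs, by rw [abs_of_nonpos hB]; ring⟩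
  have := h t (ht.trans_le (min_le_left _ _))
  rw [hBt, ht, ← sq_abs t, ht] at this
  nlinarith

theorem abs_sub_sub_abs_of_abs_le {d t : ℝ} (ht : |t| ≤ |d|) :
    |d - t| - |d| = -(Real.sign d * t) := by
  rcases lt_trichotomy d 0 with hd | rfl | hd
  · rw [abs_of_neg hd] at ht
    rw [Real.sign_of_neg hd, abs_of_neg hd, abs_of_nonpos (by linarith [neg_abs_le t])]
    ring
  · simp_all
  · rw [abs_of_pos hd] at ht
    rw [Real.sign_of_pos hd, abs_of_pos hd, abs_of_nonneg (by linarith [le_abs_self t])]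
    ring

theorem abs_min_sub_min_add_abs_max_sub_max_le (a b c d : ℝ) :
    |min a b - min c d| + |max a b - max c d| ≤ |a - c| + |b - d| := by
  grind

theorem extend_val_of_lt {α : Type*} {m : ℕ} (f : Fin m → α) (d : ℕ → α) {i : ℕ} (hi : i < m) :
    Function.extend Fin.val f d i = f ⟨i, hi⟩ :=
  Fin.val_injective.extend_apply f d ⟨i, hi⟩

noncomputable def tvNat (n : ℕ) (y τ : ℕ → ℝ) (lam : ℝ) (w : ℕ → ℝ) : ℝ :=
  (∑ i ∈ range (n + 1), τ i * (y i - w i) ^ 2) + lam * ∑ i ∈ range n, |w (i + 1) - w i|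

def IsTVMin (n : ℕ) (y τ : ℕ → ℝ) (lam : ℝ) (w : ℕ → ℝ) : Prop :=
  ∀ w', tvNat n y τ lam w ≤ tvNat n y τ lam w'

/-- The dual variable of the edge `(k, k + 1)`. -/
def tvDual (y τ w : ℕ → ℝ) (k : ℕ) : ℝ := ∑ i ∈ range (k + 1), 2 * τ i * (w i - y i)

theorem tvF_eq_tvNat (n : ℕ) (y τ : ℕ → ℝ) (lam : ℝ) (w : ℕ → ℝ) :
    tvF n (fun i => y i) (fun i => τ i) lam (fun i => w i) = tvNat n y τ lam w := by
  rw [tvF, tvNat, Fin.sum_univ_eq_sum_range (fun i => τ i * (y i - w i) ^ 2),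
    ← Fin.sum_univ_eq_sum_range (fun i => |w (i + 1) - w i|)]
  simp only [Fin.val_succ, Fin.val_castSucc]

theorem IsTVMin.of_tvF {n : ℕ} {y τ w : Fin (n + 1) → ℝ} {lam : ℝ}
    (hw : ∀ v, tvF n y τ lam w ≤ tvF n y τ lam v) {Y T W : ℕ → ℝ}
    (hY : ∀ i : Fin (n + 1), Y i = y i) (hT : ∀ i : Fin (n + 1), T i = τ i)
    (hW : ∀ i : Fin (n + 1), W i = w i) : IsTVMin n Y T lam W := fun V => by
  have := hw fun i => V i
  rwa [show y = fun i : Fin (n + 1) => Y i from funext fun i => (hY i).symm,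
    show τ = fun i : Fin (n + 1) => T i from funext fun i => (hT i).symm,
    show w = fun i : Fin (n + 1) => W i from funext fun i => (hW i).symm,
    tvF_eq_tvNat, tvF_eq_tvNat] at this

theorem sum_mul_sq_sub_add (s : Finset ℕ) (y τ w : ℕ → ℝ) (t : ℝ) :
    ∑ i ∈ s, τ i * (y i - (w i + t)) ^ 2 =
      ∑ i ∈ s, τ i * (y i - w i) ^ 2 + (∑ i ∈ s, τ i) * t ^ 2 +
        (∑ i ∈ s, 2 * τ i * (w i - y i)) * t := by
  simp only [sum_mul, ← sum_add_distrib]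
  exact sum_congr rfl fun i _ => by ring

theorem tvNat_add_const (n : ℕ) (y τ : ℕ → ℝ) (lam t : ℝ) (w : ℕ → ℝ) :
    tvNat n y τ lam (fun i => w i + t) =
      tvNat n y τ lam w + (∑ i ∈ range (n + 1), τ i) * t ^ 2 + tvDual y τ w n * t := by
  simp only [tvNat, tvDual, sum_mul_sq_sub_add, add_sub_add_right_eq_sub]
  ring

theorem tvNat_add_prefix {n k : ℕ} (hk : k < n) (y τ : ℕ → ℝ) (lam t : ℝ) (w : ℕ → ℝ) :
    tvNat n y τ lam (fun i => if i ≤ k then w i + t else w i) =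
      tvNat n y τ lam w + (∑ i ∈ range (k + 1), τ i) * t ^ 2 + tvDual y τ w k * t +
        lam * (|w (k + 1) - w k - t| - |w (k + 1) - w k|) := by
  set v : ℕ → ℝ := fun i => if i ≤ k then w i + t else w i
  have hsamples : ∀ f : ℕ → ℝ, ∑ i ∈ range (n + 1), f i =
      ∑ i ∈ range (k + 1), f i + ∑ i ∈ Ico (k + 1) (n + 1), f i :=
    fun f => (sum_range_add_sum_Ico f (by omega)).symm
  have hedges : ∀ f : ℕ → ℝ, ∑ i ∈ range n, f i =
      ∑ i ∈ range k, f i + f k + ∑ i ∈ Ico (k + 1) n, f i := fun f => by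
    rw [← sum_range_succ, sum_range_add_sum_Ico f hk]
  have hhead : ∀ i ∈ range (k + 1), v i = w i + t := fun i hi => if_pos (by simp at hi; omega)
  have htail : ∀ i ∈ Ico (k + 1) (n + 1), v i = w i := fun i hi => if_neg (by simp at hi; omega)
  have hjump : v (k + 1) - v k = w (k + 1) - w k - t := by
    simp only [v, if_neg (by omega : ¬k + 1 ≤ k), if_pos le_rfl]; ring
  have htv_head : ∑ i ∈ range k, |v (i + 1) - v i| = ∑ i ∈ range k, |w (i + 1) - w i| :=
    sum_congr rfl fun i hi => by
      rw [hhead i (by simp at hi ⊢; omega), hhead (i + 1) (by simp at hi ⊢; omega)]; ring_nf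
  have htv_tail : ∑ i ∈ Ico (k + 1) n, |v (i + 1) - v i| = ∑ i ∈ Ico (k + 1) n, |w (i + 1) - w i| :=
    sum_congr rfl fun i hi => by
      rw [htail i (by simp at hi ⊢; omega), htail (i + 1) (by simp at hi ⊢; omega)]
  have hsq_head : ∑ i ∈ range (k + 1), τ i * (y i - v i) ^ 2 =
      ∑ i ∈ range (k + 1), τ i * (y i - (w i + t)) ^ 2 :=
    sum_congr rfl fun i hi => by rw [hhead i hi]
  have hsq_tail : ∑ i ∈ Ico (k + 1) (n + 1), τ i * (y i - v i) ^ 2 =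
      ∑ i ∈ Ico (k + 1) (n + 1), τ i * (y i - w i) ^ 2 :=
    sum_congr rfl fun i hi => by rw [htail i hi]
  rw [tvNat, tvNat, hsamples, hsamples, hedges, hedges (fun i => |w (i + 1) - w i|), htv_head,
    htv_tail, hjump, hsq_head, hsq_tail, sum_mul_sq_sub_add, tvDual]
  ring

theorem tvNat_succ (n : ℕ) (y τ : ℕ → ℝ) (lam : ℝ) (w : ℕ → ℝ) :
    tvNat (n + 1) y τ lam w =
      τ 0 * (y 0 - w 0) ^ 2 + lam * |w 1 - w 0| +
        tvNat n (fun i => y (i + 1)) (fun i => τ (i + 1)) lam (fun i => w (i + 1)) := by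
  rw [tvNat, tvNat, sum_range_succ' (fun i => τ i * (y i - w i) ^ 2),
    sum_range_succ' (fun i => |w (i + 1) - w i|)]
  ring

theorem tvDual_succ (y τ w : ℕ → ℝ) (k : ℕ) :
    tvDual y τ w (k + 1) = 2 * τ 0 * (w 0 - y 0) +
      tvDual (fun i => y (i + 1)) (fun i => τ (i + 1)) (fun i => w (i + 1)) k := by
  rw [tvDual, tvDual, sum_range_succ']
  ring

theorem tvDual_sub (y τ w v : ℕ → ℝ) (k : ℕ) :
    tvDual y τ w k - tvDual y τ v k = tvDual v τ w k := by
  rw [tvDual, tvDual, tvDual, ← sum_sub_distrib]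
  exact sum_congr rfl fun i _ => by ring

theorem tvNat_midpoint_add_le {lam : ℝ} (hlam : 0 ≤ lam) (n : ℕ) (y τ w w' : ℕ → ℝ) :
    tvNat n y τ lam (fun i => (w i + w' i) / 2) + ∑ i ∈ range (n + 1), τ i * ((w i - w' i) / 2) ^ 2
      ≤ (tvNat n y τ lam w + tvNat n y τ lam w') / 2 := by
  have hsq : ∑ i ∈ range (n + 1), τ i * (y i - (w i + w' i) / 2) ^ 2 +
      ∑ i ∈ range (n + 1), τ i * ((w i - w' i) / 2) ^ 2 =
      (∑ i ∈ range (n + 1), τ i * (y i - w i) ^ 2 +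
        ∑ i ∈ range (n + 1), τ i * (y i - w' i) ^ 2) / 2 := by
    simp only [← sum_add_distrib, sum_div]
    exact sum_congr rfl fun i _ => by ring
  have htv : ∑ i ∈ range n, |(w (i + 1) + w' (i + 1)) / 2 - (w i + w' i) / 2| ≤
      (∑ i ∈ range n, |w (i + 1) - w i| + ∑ i ∈ range n, |w' (i + 1) - w' i|) / 2 := by
    rw [← sum_add_distrib, sum_div]
    refine sum_le_sum fun i _ => ?_
    rw [show (w (i + 1) + w' (i + 1)) / 2 - (w i + w' i) / 2 =
      ((w (i + 1) - w i) + (w' (i + 1) - w' i)) / 2 by ring, abs_div, abs_two]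
    gcongr
    exact abs_add_le _ _
  simp only [tvNat]
  linarith [mul_le_mul_of_nonneg_left htv hlam]

theorem tvNat_min_add_max_le {lam : ℝ} (hlam : 0 ≤ lam) {n : ℕ} {y y' τ : ℕ → ℝ}
    (hτ : ∀ i ≤ n, 0 ≤ τ i) (hy : ∀ i ≤ n, y i ≤ y' i) (w w' : ℕ → ℝ) :
    tvNat n y τ lam (fun i => min (w i) (w' i)) + tvNat n y' τ lam (fun i => max (w i) (w' i))
      ≤ tvNat n y τ lam w + tvNat n y' τ lam w' := by
  have hsq : ∀ i ∈ range (n + 1),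
      τ i * (y i - min (w i) (w' i)) ^ 2 + τ i * (y' i - max (w i) (w' i)) ^ 2
        ≤ τ i * (y i - w i) ^ 2 + τ i * (y' i - w' i) ^ 2 := fun i hi => by
    rw [mem_range_succ_iff] at hi
    rcases le_total (w i) (w' i) with h | h
    · rw [min_eq_left h, max_eq_right h]
    · rw [min_eq_right h, max_eq_left h]
      nlinarith [mul_nonneg (mul_nonneg (hτ i hi) (sub_nonneg.mpr (hy i hi))) (sub_nonneg.mpr h)]
  have hsq_sum := sum_le_sum hsq
  have htv_sum := sum_le_sum fun i (_ : i ∈ range n) =>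
    abs_min_sub_min_add_abs_max_sub_max_le (w (i + 1)) (w' (i + 1)) (w i) (w' i)
  simp only [sum_add_distrib] at hsq_sum htv_sum
  simp only [tvNat]
  linarith [mul_le_mul_of_nonneg_left htv_sum hlam]

namespace IsTVMin

variable {n : ℕ} {y τ : ℕ → ℝ} {lam : ℝ} {w : ℕ → ℝ}

theorem tvDual_last_eq_zero (hw : IsTVMin n y τ lam w) : tvDual y τ w n = 0 := by
  refine abs_nonpos_iff.mp (abs_le_of_forall_quadratic_nonneg (A := ∑ i ∈ range (n + 1), τ i)
    zero_lt_one fun t _ => ?_)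
  have := hw fun i => w i + t
  rw [tvNat_add_const] at this
  linarith

theorem abs_tvDual_le (hw : IsTVMin n y τ lam w) (hlam : 0 ≤ lam) {k : ℕ} (hk : k < n) :
    |tvDual y τ w k| ≤ lam := by
  refine abs_le_of_forall_quadratic_nonneg (A := ∑ i ∈ range (k + 1), τ i) zero_lt_one
    fun t _ => ?_
  have hmin := hw fun i => if i ≤ k then w i + t else w i
  have htri : |w (k + 1) - w k - t| - |w (k + 1) - w k| ≤ |t| := by
    simpa using abs_sub_abs_le_abs_sub (w (k + 1) - w k - t) (w (k + 1) - w k)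
  rw [tvNat_add_prefix hk] at hmin
  nlinarith [mul_le_mul_of_nonneg_left htri hlam]

theorem tvDual_eq_of_ne (hw : IsTVMin n y τ lam w) {k : ℕ} (hk : k < n) (hne : w k ≠ w (k + 1)) :
    tvDual y τ w k = lam * Real.sign (w (k + 1) - w k) := by
  have hd : 0 < |w (k + 1) - w k| := abs_pos.mpr (sub_ne_zero.mpr hne.symm)
  refine sub_eq_zero.mp (abs_nonpos_iff.mp (abs_le_of_forall_quadratic_nonneg
    (A := ∑ i ∈ range (k + 1), τ i) hd fun t ht => ?_))
  have hmin := hw fun i => if i ≤ k then w i + t else w i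
  rw [tvNat_add_prefix hk, abs_sub_sub_abs_of_abs_le ht] at hmin
  linarith

theorem mul_tvDual_of_sign_eq (hw : IsTVMin n y τ lam w) {k : ℕ} (hk : k < n)
    (hne : w k ≠ w (k + 1)) {c : ℝ} (hsign : Real.sign (w k - w (k + 1)) = Real.sign c) :
    c * tvDual y τ w k = -(lam * |c|) := by
  rw [hw.tvDual_eq_of_ne hk hne, ← neg_sub, Real.sign_neg, hsign, ← Real.mul_sign_self]
  ring

theorem unique (hw : IsTVMin n y τ lam w) {w' : ℕ → ℝ} (hw' : IsTVMin n y τ lam w')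
    (hτ : ∀ i ≤ n, 0 < τ i) (hlam : 0 ≤ lam) {i : ℕ} (hi : i ≤ n) : w i = w' i := by
  have hnonneg : ∀ j ∈ range (n + 1), 0 ≤ τ j * ((w j - w' j) / 2) ^ 2 := fun j hj =>
    mul_nonneg (hτ j (mem_range_succ_iff.mp hj)).le (sq_nonneg _)
  have hle : ∑ j ∈ range (n + 1), τ j * ((w j - w' j) / 2) ^ 2 ≤ 0 := by
    linarith [tvNat_midpoint_add_le hlam n y τ w w', hw fun i => (w i + w' i) / 2, hw w', hw' w]
  have hsum := le_antisymm hle (sum_nonneg hnonneg)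
  have hterm := (sum_eq_zero_iff_of_nonneg hnonneg).mp hsum i (mem_range_succ_iff.mpr hi)
  have : (w i - w' i) / 2 = 0 := by simpa [(hτ i hi).ne'] using hterm
  linarith

theorem mono (hw : IsTVMin n y τ lam w) {y' w' : ℕ → ℝ} (hw' : IsTVMin n y' τ lam w')
    (hτ : ∀ i ≤ n, 0 < τ i) (hlam : 0 ≤ lam) (hy : ∀ i ≤ n, y i ≤ y' i) {i : ℕ} (hi : i ≤ n) :
    w i ≤ w' i := by
  have hmax : IsTVMin n y' τ lam fun i => max (w i) (w' i) := fun v => by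
    linarith [tvNat_min_add_max_le hlam (fun i hi => (hτ i hi).le) hy w w',
      hw fun i => min (w i) (w' i), hw' v]
  rw [← hmax.unique hw' hτ hlam hi]
  exact le_max_left _ _

theorem sign_first_jump_ne (hw : IsTVMin (n + 1) y τ lam w) (hτ : 0 < τ 0) (hlam : 0 ≤ lam)
    (hne : w 0 ≠ w 1) : Real.sign (w 0 - w 1) ≠ Real.sign (w 0 - y 0) := by
  intro hsign
  have hc : w 0 - y 0 ≠ 0 := fun h => by
    rw [h, Real.sign_zero, Real.sign_eq_zero_iff, sub_eq_zero] at hsign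
    exact hne hsign
  have := hw.mul_tvDual_of_sign_eq n.succ_pos hne hsign
  simp only [tvDual, zero_add, range_one, sum_singleton] at this
  nlinarith [mul_pos (mul_pos two_pos hτ) (pow_pos (abs_pos.mpr hc) 2), sq_abs (w 0 - y 0),
    abs_nonneg (w 0 - y 0)]

/-- `w (i - 1)` repeats `w 0` at index `0`; this prepended sample costs nothing. -/
theorem pad (hw : IsTVMin n (fun i => y (i + 1)) (fun i => τ (i + 1)) lam w)
    (hτ : 0 ≤ τ 0) (hlam : 0 ≤ lam) :
    IsTVMin (n + 1) (Function.update y 0 (w 0)) τ lam fun i => w (i - 1) := fun v => by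
  rw [tvNat_succ, tvNat_succ]
  simp only [Function.update_self, Function.update_of_ne (Nat.succ_ne_zero _), Nat.add_sub_cancel,
    Nat.zero_sub, sub_self, abs_zero, mul_zero, ne_eq, OfNat.ofNat_ne_zero, not_false_eq_true,
    zero_pow, zero_add]
  have : 0 ≤ τ 0 * (w 0 - v 0) ^ 2 + lam * |v 1 - v 0| := by positivity
  linarith [hw fun i => v (i + 1)]

section DropFirst

variable {U W : ℕ → ℝ} (hU : IsTVMin (n + 1) y τ lam U)
  (hW : IsTVMin n (fun i => y (i + 1)) (fun i => τ (i + 1)) lam W)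
include hU hW

theorem tvDual_dropFirst :
    tvDual (fun i => U (i + 1)) (fun i => τ (i + 1)) W n = 2 * τ 0 * (U 0 - y 0) := by
  have := hU.tvDual_last_eq_zero
  rw [tvDual_succ] at this
  rw [← tvDual_sub, hW.tvDual_last_eq_zero]
  linarith

theorem mul_sub_nonneg_dropFirst (hτ : ∀ i ≤ n + 1, 0 < τ i) (hlam : 0 ≤ lam) {i : ℕ}
    (hi : i ≤ n) : 0 ≤ (U 0 - y 0) * (W i - U (i + 1)) := by
  have hpad := hW.pad (hτ 0 (by omega)).le hlam
  have hmass := tvDual_dropFirst hU hW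
  have hτ' : ∀ j ∈ range (n + 1), 0 < 2 * τ (j + 1) := fun j hj =>
    mul_pos two_pos (hτ _ (by simp at hj; omega))
  rcases le_total (y 0) (W 0) with h0 | h0
  · have hle : ∀ j ≤ n, U (j + 1) ≤ W j := fun j hj =>
      hU.mono hpad hτ hlam (fun l _ => by rcases l with _ | l <;> simp [h0]) (i := j + 1)
        (by omega)
    have : 0 ≤ tvDual (fun i => U (i + 1)) (fun i => τ (i + 1)) W n :=
      sum_nonneg fun j hj => mul_nonneg (hτ' j hj).le
        (sub_nonneg.mpr (hle j (mem_range_succ_iff.mp hj)))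
    exact mul_nonneg (by nlinarith [hτ 0 (by omega)]) (sub_nonneg.mpr (hle i hi))
  · have hle : ∀ j ≤ n, W j ≤ U (j + 1) := fun j hj =>
      hpad.mono hU hτ hlam (fun l _ => by rcases l with _ | l <;> simp [h0]) (i := j + 1)
        (by omega)
    have : tvDual (fun i => U (i + 1)) (fun i => τ (i + 1)) W n ≤ 0 :=
      sum_nonpos fun j hj => mul_nonpos_of_nonneg_of_nonpos (hτ' j hj).le
        (sub_nonpos.mpr (hle j (mem_range_succ_iff.mp hj)))
    exact mul_nonneg_of_nonpos_of_nonpos (by nlinarith [hτ 0 (by omega)])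
      (sub_nonpos.mpr (hle i hi))

theorem eq_of_sign_eq_dropFirst (hτ : ∀ i ≤ n + 1, 0 < τ i) (hlam : 0 ≤ lam) {k : ℕ}
    (hk : k ≤ n) (hne : U k ≠ U (k + 1))
    (hsign : Real.sign (U k - U (k + 1)) = Real.sign (U 0 - y 0)) {i : ℕ} (hki : k ≤ i)
    (hi : i ≤ n) : W i = U (i + 1) := by
  obtain _ | k := k
  · exact absurd hsign (hU.sign_first_jump_ne (hτ 0 (by omega)) hlam hne)
  set c := U 0 - y 0
  set y' : ℕ → ℝ := fun i => y (i + 1)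
  set τ' : ℕ → ℝ := fun i => τ (i + 1)
  set U' : ℕ → ℝ := fun i => U (i + 1)
  have hc : c ≠ 0 := fun h => by
    rw [h, Real.sign_zero, Real.sign_eq_zero_iff, sub_eq_zero] at hsign
    exact hne hsign
  have hU_dual := hU.mul_tvDual_of_sign_eq (by omega) hne hsign
  have hW_dual : -(|c| * lam) ≤ c * tvDual y' τ' W k := by
    have := mul_le_mul_of_nonneg_left (hW.abs_tvDual_le hlam (k := k) (by omega)) (abs_nonneg c)
    rw [← abs_mul] at this
    linarith [neg_abs_le (c * tvDual y' τ' W k)]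
  have hD_jump : tvDual U' τ' W k = tvDual y' τ' W k - (tvDual y τ U (k + 1) - 2 * τ 0 * c) := by
    rw [tvDual_succ, ← tvDual_sub y' τ' W U']; ring
  have hD_last : tvDual U' τ' W n = 2 * τ 0 * c := tvDual_dropFirst hU hW
  have hterm : ∀ j ∈ Ico (k + 1) (n + 1), 0 ≤ c * (2 * τ' j * (W j - U' j)) := fun j hj => by
    have := mul_sub_nonneg_dropFirst hU hW hτ hlam (i := j) (by simp at hj; omega)
    have := hτ (j + 1) (by simp at hj; omega)
    simp only [τ', U']
    nlinarith
  have htail : ∑ j ∈ Ico (k + 1) (n + 1), c * (2 * τ' j * (W j - U' j)) = 0 := by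
    refine le_antisymm ?_ (sum_nonneg hterm)
    rw [← mul_sum, sum_Ico_eq_sub _ (by omega)]
    change c * (tvDual U' τ' W n - tvDual U' τ' W k) ≤ 0
    rw [hD_last, hD_jump]
    nlinarith
  have hzero := (sum_eq_zero_iff_of_nonneg hterm).mp htail i (by simp; omega)
  have hτi : τ' i ≠ 0 := (hτ (i + 1) (by omega)).ne'
  simpa only [mul_eq_zero, hc, hτi, false_or, OfNat.ofNat_ne_zero, sub_eq_zero] using hzero

end DropFirst

end IsTVMin

section Segments

variable {K m : ℕ} {start : Fin (K + 1) → Fin m} {U : ℕ → ℝ} {v : Fin K → ℝ}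

theorem segment_apply_start (hmono : StrictMono start)
    (hseg : ∀ (j : Fin K) (i : ℕ), (start j.castSucc : ℕ) ≤ i → i < start j.succ → U i = v j)
    (j : Fin K) : U (start j.castSucc) = v j :=
  hseg j _ le_rfl (hmono Fin.castSucc_lt_succ)

theorem segment_apply_start_sub_one (hmono : StrictMono start)
    (hseg : ∀ (j : Fin K) (i : ℕ), (start j.castSucc : ℕ) ≤ i → i < start j.succ → U i = v j)
    (j : Fin K) (hj : 1 ≤ (j : ℕ)) :
    0 < (start j.castSucc : ℕ) ∧ U (start j.castSucc - 1) = v ⟨j - 1, by omega⟩ := by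
  have hprev : (⟨j - 1, by omega⟩ : Fin K).succ = j.castSucc := Fin.ext (by simp; omega)
  have hlt := Fin.lt_def.mp (hmono (Fin.castSucc_lt_succ (i := ⟨j - 1, by omega⟩)))
  rw [hprev] at hlt
  exact ⟨by omega, hseg _ _ (by omega) (by rw [hprev]; omega)⟩

end Segments

/-- **Theorem 2 (influence of removing the first sample).**
The `m = n+2 ≥ 2` samples are `y τ : Fin (n+2) → ℝ` and `u` is the unique minimizer
of `F(·, y, τ, λ)`.  Its segment structure is given by `K` (number of segments),
the strictly increasing boundary function `start : Fin (K+1) → Fin (n+3)` (the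
`j`-th segment, `j : Fin K`, consists of the sample indices `i` with
`start j.castSucc ≤ i < start j.succ`), and the segment levels `v : Fin K → ℝ`
(adjacent levels distinct, by maximality).  The first sample is removed:
`uh : Fin (n+1) → ℝ` is the unique minimizer for the data `(y_1, …)`, `(τ_1, …)`
(0-based shift), indexed so that `uh (i-1)` corresponds to the original index `i`.
If there is a segment index `j` with `1 ≤ j ≤ K−2` (0-based; `2 ≤ j ≤ K*−1`
1-based, so that segment `j+1` exists) with
`sign(v_{j−1} − v_j) = sign(v_0 − y_0)` and `j` is the smallest such index, then
`uh (i-1) = u i` for every sample index `i` at or beyond the first index of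
segment `j+1`. -/
theorem tv_remove_first_sample_influence (n : ℕ) (y τ : Fin (n + 2) → ℝ)
    (hτ : ∀ i, 0 < τ i) (lam : ℝ) (hlam : 0 ≤ lam)
    (u : Fin (n + 2) → ℝ)
    (hu : ∀ w : Fin (n + 2) → ℝ, tvF (n + 1) y τ lam u ≤ tvF (n + 1) y τ lam w)
    (K : ℕ) (hK : 0 < K)
    (start : Fin (K + 1) → Fin (n + 3)) (hmono : StrictMono start)
    (hstart0 : start 0 = 0)
    (v : Fin K → ℝ)
    (hseg : ∀ (j : Fin K) (i : ℕ), (start j.castSucc : ℕ) ≤ i →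
      ∀ hi : i < (start j.succ : ℕ),
        u ⟨i, by have := (start j.succ).isLt; omega⟩ = v j)
    (hmax : ∀ (j : ℕ) (hj : j + 1 < K), v ⟨j, by omega⟩ ≠ v ⟨j + 1, hj⟩)
    (uh : Fin (n + 1) → ℝ)
    (huh : ∀ w : Fin (n + 1) → ℝ,
      tvF n (fun i => y i.succ) (fun i => τ i.succ) lam uh ≤
        tvF n (fun i => y i.succ) (fun i => τ i.succ) lam w)
    (j : Fin K) (hj1 : 1 ≤ (j : ℕ))
    (hsign : Real.sign (v ⟨(j : ℕ) - 1, by have := j.isLt; omega⟩ - v j) =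
      Real.sign (v ⟨0, hK⟩ - y 0)) :
    ∀ i : ℕ, (start j.succ : ℕ) ≤ i → ∀ hi : i < n + 2,
      uh ⟨i - 1, by omega⟩ = u ⟨i, hi⟩ := by
  intro i hi_start hi
  have hU := IsTVMin.of_tvF hu (Fin.val_injective.extend_apply y 0)
    (Fin.val_injective.extend_apply τ 0) (Fin.val_injective.extend_apply u 0)
  have hW := IsTVMin.of_tvF huh (Y := fun i => Function.extend Fin.val y 0 (i + 1))
    (T := fun i => Function.extend Fin.val τ 0 (i + 1))
    (fun i => Fin.val_injective.extend_apply y 0 i.succ)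
    (fun i => Fin.val_injective.extend_apply τ 0 i.succ) (Fin.val_injective.extend_apply uh 0)
  have hT : ∀ i ≤ n + 1, 0 < Function.extend Fin.val τ 0 i := fun i hi => by
    rw [extend_val_of_lt τ 0 (by omega)]
    exact hτ _
  have hsegU : ∀ (j : Fin K) (i : ℕ), (start j.castSucc : ℕ) ≤ i → i < start j.succ →
      Function.extend Fin.val u 0 i = v j := fun j i h1 h2 => by
    rw [extend_val_of_lt u 0 (by omega)]
    exact hseg j i h1 h2
  obtain ⟨hpos, hprev⟩ := segment_apply_start_sub_one hmono hsegU j hj1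
  have hcur := segment_apply_start hmono hsegU j
  have hfirst : Function.extend Fin.val u 0 0 = v ⟨0, hK⟩ := by
    simpa [hstart0] using segment_apply_start hmono hsegU ⟨0, hK⟩
  have hjump : v ⟨j - 1, by omega⟩ ≠ v j := by
    simpa [Nat.sub_add_cancel hj1] using hmax (j - 1) (by omega)
  have hlt : (start j.castSucc : ℕ) < start j.succ := hmono Fin.castSucc_lt_succ
  have key := hU.eq_of_sign_eq_dropFirst hW hT hlam (k := start j.castSucc - 1) (by omega)
    (by rwa [Nat.sub_add_cancel hpos, hprev, hcur])
    (by rwa [Nat.sub_add_cancel hpos, hprev, hcur, hfirst, extend_val_of_lt y 0 (by omega)])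
    (i := i - 1) (by omega) (by omega)
  rwa [Nat.sub_add_cancel (by omega), extend_val_of_lt u 0 hi, extend_val_of_lt uh 0] at key
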